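/- arXiv:1509.08206 — 3 statements merged into one kernel-verified Lean document; each statement's English description precedes it below -/
import Mathlib

section
/- Let f_1,...,f_n : ℝ → ℝ be proper, lower semi-continuous, convex functions, and consider the problem of minimizing ∑_i f_i(x_i) subject to ∑_i x_i = C. Let x* be a global minimizer with value p* = ∑_i f_i(x*_i). Suppose iterates (x^{k+1}, y^{k+1}) are generated by the exact DM-ADMM update: y^{k+1} = y^k + ρ r^k and x_i^{k+1} = argmin_x f_i(x) + y^{k+1}(x + r^k - x_i^k) + (ρ/2)(x + r^k - x_i^k)², where r^k = ∑_i x_i^k - C. Then the objective value p^{k+1} = ∑_i f_i(x_i^{k+1}) satisfies p^{k+1} - p* ≤ -y^{k+2} r^{k+1} - ρ(r^k - r^{k+1}) r^{k+1} - ρ ∑_{i=1}^n (x_i^k - x_i^{k+1})(x*_i - x_i^{k+1}). -/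
/-!
Minimality of `x₀` for `f + g` with `f` convex and `g` differentiable makes `-g'(x₀)` a
subgradient of `f` at `x₀`. Each agent's subproblem has a smooth quadratic part whose derivative
at `x_i^{k+1}` is `y^{k+1} + ρ (x_i^{k+1} + r^k - x_i^k)`; summing the subgradient inequalities at
`x*` and using `∑ (x*_i - x_i^{k+1}) = -r^{k+1}` gives the bound.
-/

open Filter Topology Finset

theorem ConvexOn.le_add_fderiv_of_isMinOn {E : Type*} [NormedAddCommGroup E] [NormedSpace ℝ E]
    {s : Set E} {f g : E → ℝ} {g' : E →L[ℝ] ℝ} {x₀ x : E} (hf : ConvexOn ℝ s f)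
    (hg : HasFDerivAt g g' x₀) (hmin : IsMinOn (f + g) s x₀) (hx₀ : x₀ ∈ s) (hx : x ∈ s) :
    f x₀ ≤ f x + g' (x - x₀) := by
  set φ : ℝ → ℝ := fun t ↦ g (x₀ + t • (x - x₀))
  have hφ : HasDerivAt φ (g' (x - x₀)) 0 := by
    have hline : HasDerivAt (fun t : ℝ ↦ x₀ + t • (x - x₀)) ((1 : ℝ) • (x - x₀)) 0 :=
      ((hasDerivAt_id 0).smul_const (x - x₀)).const_add x₀
    have hg0 : HasFDerivAt g g' (x₀ + (0 : ℝ) • (x - x₀)) := by rwa [zero_smul, add_zero]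
    have h := hg0.comp_hasDerivAt 0 hline
    rwa [one_smul] at h
  have hslope : ∀ t ∈ Set.Ioc (0 : ℝ) 1, f x₀ - f x ≤ t⁻¹ * (φ t - φ 0) := by
    rintro t ⟨ht₀, ht₁⟩
    have hpt : x₀ + t • (x - x₀) = (1 - t) • x₀ + t • x := by module
    have hmem := hf.1 hx₀ hx (sub_nonneg.2 ht₁) ht₀.le (sub_add_cancel 1 t)
    have hconv := hf.2 hx₀ hx (sub_nonneg.2 ht₁) ht₀.le (sub_add_cancel 1 t)
    have hle := hmin hmem
    simp only [Set.mem_ofPred_eq, Pi.add_apply, smul_eq_mul] at hconv hle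
    rw [le_inv_mul_iff₀ ht₀]
    simp only [φ, zero_smul, add_zero, hpt]
    linarith
  suffices f x₀ - f x ≤ g' (x - x₀) by linarith
  refine ge_of_tendsto (by simpa using hφ.tendsto_slope_zero_right) ?_
  filter_upwards [Ioc_mem_nhdsGT zero_lt_one] with t ht
  simpa using hslope t ht

theorem ConvexOn.le_of_minimizes_add_quadratic {f : ℝ → ℝ} (hf : ConvexOn ℝ Set.univ f)
    {ρ y c x₀ : ℝ}
    (hmin : ∀ x, f x₀ + y * (x₀ + c) + ρ / 2 * (x₀ + c) ^ 2
      ≤ f x + y * (x + c) + ρ / 2 * (x + c) ^ 2) (x : ℝ) :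
    f x₀ ≤ f x + (y + ρ * (x₀ + c)) * (x - x₀) := by
  have hg : HasDerivAt (fun x ↦ y * (x + c) + ρ / 2 * (x + c) ^ 2) (y + ρ * (x₀ + c)) x₀ := by
    have hlin : HasDerivAt (fun x ↦ x + c) 1 x₀ := (hasDerivAt_id' x₀).add_const c
    refine ((hlin.const_mul y).add ((hlin.pow 2).const_mul (ρ / 2))).congr_deriv ?_
    ring
  have hsub := hf.le_add_fderiv_of_isMinOn hg.hasFDerivAt
    (fun x _ ↦ by simpa only [Set.mem_ofPred_eq, Pi.add_apply, add_assoc] using hmin x)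
    trivial trivial (x := x)
  simpa [mul_comm] using hsub

theorem dm_admm_objective_bound_general
    (n : ℕ) (f : Fin n → ℝ → ℝ) (C ρ : ℝ)
    (hconv : ∀ i, ConvexOn ℝ Set.univ (f i))
    (xstar : Fin n → ℝ) (hfeas : ∑ i, xstar i = C)
    (xk xk1 : Fin n → ℝ) (yk1 yk2 : ℝ)
    (rk rk1 : ℝ) (hrk1 : rk1 = ∑ i, xk1 i - C)
    (hyk2 : yk2 = yk1 + ρ * rk1)
    (hupd : ∀ i, ∀ x : ℝ,
      f i (xk1 i) + yk1 * (xk1 i + rk - xk i) + (ρ / 2) * (xk1 i + rk - xk i) ^ 2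
        ≤ f i x + yk1 * (x + rk - xk i) + (ρ / 2) * (x + rk - xk i) ^ 2) :
    (∑ i, f i (xk1 i)) - (∑ i, f i (xstar i))
      ≤ -yk2 * rk1 - ρ * (rk - rk1) * rk1
        - ρ * ∑ i, (xk i - xk1 i) * (xstar i - xk1 i) := by
  have hagent i := (hconv i).le_of_minimizes_add_quadratic
    (by simpa only [add_sub_assoc] using hupd i) (xstar i)
  calc (∑ i, f i (xk1 i)) - ∑ i, f i (xstar i)
      ≤ ∑ i, ((yk1 + ρ * rk) * (xstar i - xk1 i)
          - ρ * ((xk i - xk1 i) * (xstar i - xk1 i))) := by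
        rw [← sum_sub_distrib]
        exact sum_le_sum fun i _ ↦ by linear_combination hagent i
    _ = (yk1 + ρ * rk) * (C - ∑ i, xk1 i) - ρ * ∑ i, (xk i - xk1 i) * (xstar i - xk1 i) := by
        rw [sum_sub_distrib, ← mul_sum, ← mul_sum, sum_sub_distrib, hfeas]
    _ = _ := by rw [hyk2, hrk1]; ring

/-- Proposition 1: objective bound for one step of exact DM-ADMM. -/
theorem dm_admm_objective_bound
    (n : ℕ) (f : Fin n → ℝ → ℝ) (C ρ : ℝ) (hρ : 0 < ρ)
    (hconv : ∀ i, ConvexOn ℝ Set.univ (f i))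
    (hlsc : ∀ i, LowerSemicontinuous (f i))
    (xstar : Fin n → ℝ) (hfeas : ∑ i, xstar i = C)
    (hmin : ∀ z : Fin n → ℝ, ∑ i, z i = C →
      ∑ i, f i (xstar i) ≤ ∑ i, f i (z i))
    (xk xk1 : Fin n → ℝ) (yk yk1 yk2 : ℝ)
    (rk rk1 : ℝ) (hrk : rk = ∑ i, xk i - C) (hrk1 : rk1 = ∑ i, xk1 i - C)
    (hyk1 : yk1 = yk + ρ * rk) (hyk2 : yk2 = yk1 + ρ * rk1)
    (hupd : ∀ i, ∀ x : ℝ,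
      f i (xk1 i) + yk1 * (xk1 i + rk - xk i) + (ρ / 2) * (xk1 i + rk - xk i) ^ 2
        ≤ f i x + yk1 * (x + rk - xk i) + (ρ / 2) * (x + rk - xk i) ^ 2) :
    (∑ i, f i (xk1 i)) - (∑ i, f i (xstar i))
      ≤ -yk2 * rk1 - ρ * (rk - rk1) * rk1
        - ρ * ∑ i, (xk i - xk1 i) * (xstar i - xk1 i) :=
  dm_admm_objective_bound_general n f C ρ hconv xstar hfeas xk xk1 yk1 yk2 rk rk1 hrk1 hyk2 hupd
end

section
/- Let f_1,...,f_n : ℝ → ℝ be proper, lower semi-continuous, convex functions with ∑_i f_i strongly convex with parameter 2ξ, and let (x*, y*) be the saddle point of minimizing ∑_i f_i(x_i) subject to ∑_i x_i = C. Let (x^k, y^k) be generated by the exact DM-ADMM updates with penalty parameter ρ satisfying 0 < ρ ≤ ξ/(2(n-1)). Then the Lyapunov quantity V^k = (1/ρ)|y^{k+1} - y*|² + (ρ+ξ)‖x^k - x*‖² satisfies V^k - V^{k+1} ≥ ρ (r^k)², where r^k = ∑_i x_i^k - C. -/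
/-!
Each local update minimises a `ρ`-strongly convex function of `x`, so comparing it with `x⋆ᵢ`
gains `ρ/2 (x⋆ᵢ - x_i^{k+1})²`; summed over the agents this is a primal inequality. The saddle
point minimises the `2ξ`-strongly convex Lagrangian, which gives the matching inequality with a
gain `ξ ‖x^{k+1} - x⋆‖²`. Adding the two and expanding the dual step
`y^{k+2} = y^{k+1} + ρ r^{k+1}` reduces the claim to
`ρ (r^{k+1} - r^k)² ≤ ρ ‖x^{k+1} - x^k‖² + ξ (‖x^k - x⋆‖² + ‖x^{k+1} - x⋆‖²)`.
Since `r^{k+1} - r^k = ∑ᵢ (x_i^{k+1} - x_i^k)`, Cauchy–Schwarz bounds the left side by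
`ρ n ‖x^{k+1} - x^k‖²`, and `‖x^{k+1} - x^k‖² ≤ 2 (‖x^k - x⋆‖² + ‖x^{k+1} - x⋆‖²)` together
with `2ρ(n - 1) ≤ ξ` absorbs the excess.
-/

open Filter Set Topology

theorem UniformConvexOn.add_le_of_isMinOn {E : Type*} [NormedAddCommGroup E] [NormedSpace ℝ E]
    {s : Set E} {φ : ℝ → ℝ} {f : E → ℝ} {a x : E} (hf : UniformConvexOn s φ f)
    (hmin : IsMinOn f s a) (ha : a ∈ s) (hx : x ∈ s) : f a + φ ‖x - a‖ ≤ f x := by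
  have hchord : ∀ t ∈ Ioo (0 : ℝ) 1, (1 - t) * φ ‖x - a‖ ≤ f x - f a := by
    rintro t ⟨ht₀, ht₁⟩
    have hconv := hf.2 hx ha ht₀.le (sub_nonneg.2 ht₁.le) (add_sub_cancel t 1)
    have hmid := hmin (hf.1 hx ha ht₀.le (sub_nonneg.2 ht₁.le) (add_sub_cancel t 1))
    rw [smul_eq_mul, smul_eq_mul] at hconv
    refine le_of_mul_le_mul_left ?_ ht₀
    linarith [show f a ≤ f (t • x + (1 - t) • a) from hmid]
  have hlim : Tendsto (fun t : ℝ => (1 - t) * φ ‖x - a‖) (𝓝[>] 0) (𝓝 (φ ‖x - a‖)) := by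
    have : Tendsto (fun t : ℝ => (1 - t) * φ ‖x - a‖) (𝓝 0) (𝓝 ((1 - 0) * φ ‖x - a‖)) :=
      ((continuous_const.sub continuous_id).mul continuous_const).tendsto 0
    simpa using this.mono_left nhdsWithin_le_nhds
  have := le_of_tendsto hlim (eventually_of_mem (Ioo_mem_nhdsGT zero_lt_one) hchord)
  linarith

theorem norm_sub_sq_le_two_mul_add {E : Type*} [SeminormedAddCommGroup E] (a b c : E) :
    ‖a - b‖ ^ 2 ≤ 2 * (‖a - c‖ ^ 2 + ‖b - c‖ ^ 2) := by
  have htri : ‖a - b‖ ≤ ‖a - c‖ + ‖b - c‖ := by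
    simpa only [norm_sub_rev c b] using norm_sub_le_norm_sub_add_norm_sub a c b
  nlinarith [norm_nonneg (a - b), sq_nonneg (‖a - c‖ - ‖b - c‖)]

section InnerProduct

variable {E : Type*} [NormedAddCommGroup E] [InnerProductSpace ℝ E]

theorem ConvexOn.strongConvexOn_add_sq_norm_sub {s : Set E} {f : E → ℝ} (hf : ConvexOn ℝ s f)
    (ρ : ℝ) (v : E) : StrongConvexOn s ρ fun z => f z + ρ / 2 * ‖z - v‖ ^ 2 := by
  rw [strongConvexOn_iff_convex]
  have hlin : ConvexOn ℝ s fun z => ((-ρ) • innerₛₗ ℝ v) z + ρ / 2 * ‖v‖ ^ 2 :=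
    (LinearMap.convexOn _ hf.1).add_const _
  refine (hf.add hlin).congr fun z _ => ?_
  simp only [Pi.add_apply, LinearMap.smul_apply, innerₛₗ_apply_apply, smul_eq_mul,
    norm_sub_sq_real, real_inner_comm]
  ring

theorem add_mul_norm_sub_sq_le_of_isMinOn {g : E → ℝ} {c : ℝ}
    (hg : ConvexOn ℝ univ fun z => g z - c * ‖z‖ ^ 2) {a : E} (hmin : IsMinOn g univ a) (x : E) :
    g a + c * ‖x - a‖ ^ 2 ≤ g x := by
  have hstrong : StrongConvexOn univ (2 * c) g := by
    rw [strongConvexOn_iff_convex]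
    simpa using hg
  simpa using hstrong.add_le_of_isMinOn hmin (mem_univ a) (mem_univ x)

end InnerProduct

/-- Agent `i`'s objective in the DM-ADMM primal step, with `y, r, v` standing for
`y^{k+1}, r^k, x_i^k`. -/
noncomputable def localAugLagrangian (f : ℝ → ℝ) (y ρ r v z : ℝ) : ℝ :=
  f z + y * (z + r - v) + ρ / 2 * (z + r - v) ^ 2

theorem localAugLagrangian_add_sq_le {f : ℝ → ℝ} (hf : ConvexOn ℝ univ f) {y ρ r v u : ℝ}
    (hu : IsMinOn (localAugLagrangian f y ρ r v) univ u) (z : ℝ) :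
    localAugLagrangian f y ρ r v u + ρ / 2 * (z - u) ^ 2 ≤ localAugLagrangian f y ρ r v z := by
  have hlin : ConvexOn ℝ univ fun z => LinearMap.mul ℝ ℝ y z + y * (r - v) :=
    (LinearMap.convexOn _ convex_univ).add_const _
  have hstrong : StrongConvexOn univ ρ (localAugLagrangian f y ρ r v) := by
    convert (hf.add hlin).strongConvexOn_add_sq_norm_sub ρ (v - r) using 1
    funext z
    simp only [localAugLagrangian, LinearMap.mul_apply', Pi.add_apply, Real.norm_eq_abs, sq_abs]
    ring
  simpa [Real.norm_eq_abs, sq_abs] using hstrong.add_le_of_isMinOn hu (mem_univ u) (mem_univ z)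

section Euclidean

variable {ι : Type*} [Fintype ι]

theorem sq_sum_le_card_mul_norm_sq (w : EuclideanSpace ℝ ι) :
    (∑ i, w i) ^ 2 ≤ Fintype.card ι * ‖w‖ ^ 2 := by
  simpa [EuclideanSpace.real_norm_sq_eq] using
    sq_sum_le_card_mul_sum_sq (s := Finset.univ) (f := fun i => w i)

theorem convexOn_mul_sum_sub (c C : ℝ) :
    ConvexOn ℝ univ fun z : EuclideanSpace ℝ ι => c * (∑ i, z i - C) := by
  refine ⟨convex_univ, fun u _ v _ a b _ _ hab => le_of_eq ?_⟩
  simp only [smul_eq_mul, PiLp.add_apply, PiLp.smul_apply, Finset.sum_add_distrib, ← Finset.mul_sum]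
  linear_combination c * C * hab

theorem sum_add_mul_norm_sub_sq_le_of_saddle {f : ι → ℝ → ℝ} {ξ C ystar : ℝ}
    (hstrong : ConvexOn ℝ univ fun x : EuclideanSpace ℝ ι => ∑ i, f i (x i) - ξ * ‖x‖ ^ 2)
    {xstar : EuclideanSpace ℝ ι} (hfeas : ∑ i, xstar i = C)
    (hsaddle : ∀ x : EuclideanSpace ℝ ι,
      ∑ i, f i (xstar i) + ystar * (∑ i, xstar i - C) ≤ ∑ i, f i (x i) + ystar * (∑ i, x i - C))
    (x : EuclideanSpace ℝ ι) :
    ∑ i, f i (xstar i) + ξ * ‖x - xstar‖ ^ 2 ≤ ∑ i, f i (x i) + ystar * (∑ i, x i - C) := by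
  have hlagr := add_mul_norm_sub_sq_le_of_isMinOn
    (g := fun z => ∑ i, f i (z i) + ystar * (∑ i, z i - C))
    ((hstrong.add (convexOn_mul_sum_sub ystar C)).congr fun z _ => by
      simp only [Pi.add_apply]; ring)
    (isMinOn_univ_iff.mpr hsaddle) x
  simpa [hfeas] using hlagr

theorem sum_le_of_isMinOn_localAugLagrangian {f : ι → ℝ → ℝ}
    (hf : ∀ i, ConvexOn ℝ univ (f i)) {y ρ r : ℝ} {u v : EuclideanSpace ℝ ι}
    (hu : ∀ i, IsMinOn (localAugLagrangian (f i) y ρ r (v i)) univ (u i))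
    (w : EuclideanSpace ℝ ι) :
    ∑ i, f i (u i) + (y + ρ * r) * ∑ i, u i + ρ / 2 * ‖u - v‖ ^ 2 + ρ / 2 * ‖u - w‖ ^ 2
      ≤ ∑ i, f i (w i) + (y + ρ * r) * ∑ i, w i + ρ / 2 * ‖v - w‖ ^ 2 := by
  have hcoord : ∀ i, f i (u i) + (y + ρ * r) * u i + ρ / 2 * (u i - v i) ^ 2
      + ρ / 2 * (u i - w i) ^ 2 ≤ f i (w i) + (y + ρ * r) * w i + ρ / 2 * (v i - w i) ^ 2 := by
    intro i
    have h := localAugLagrangian_add_sq_le (hf i) (hu i) (w i)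
    simp only [localAugLagrangian] at h
    linarith
  simpa only [Finset.sum_add_distrib, ← Finset.mul_sum, EuclideanSpace.real_norm_sq_eq,
    PiLp.sub_apply] using Finset.sum_le_sum fun i _ => hcoord i

end Euclidean

theorem dm_admm_lyapunov_descent_general
    (n : ℕ) (f : Fin n → ℝ → ℝ) (C ρ ξ ystar : ℝ)
    (hρ : 0 < ρ) (hξ : 0 < ξ) (hρξ : ρ ≤ ξ / (2 * ((n : ℝ) - 1)))
    (hconv : ∀ i, ConvexOn ℝ Set.univ (f i))
    (hstrong : ConvexOn ℝ Set.univ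
      (fun x : EuclideanSpace ℝ (Fin n) => (∑ i, f i (x i)) - ξ * ‖x‖ ^ 2))
    (xstar : EuclideanSpace ℝ (Fin n)) (hfeas : ∑ i, xstar i = C)
    (hsaddle : ∀ x : EuclideanSpace ℝ (Fin n),
      (∑ i, f i (xstar i)) + ystar * (∑ i, xstar i - C)
        ≤ (∑ i, f i (x i)) + ystar * (∑ i, x i - C))
    (x : ℕ → EuclideanSpace ℝ (Fin n)) (y : ℕ → ℝ) (r : ℕ → ℝ)
    (hr : ∀ k, r k = ∑ i, x k i - C)
    (hy : ∀ k, y (k + 1) = y k + ρ * r k)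
    (hupd : ∀ k, ∀ i, ∀ z : ℝ,
      f i (x (k + 1) i) + y (k + 1) * (x (k + 1) i + r k - x k i)
          + (ρ / 2) * (x (k + 1) i + r k - x k i) ^ 2
        ≤ f i z + y (k + 1) * (z + r k - x k i)
          + (ρ / 2) * (z + r k - x k i) ^ 2) :
    ∀ k,
      ((1 / ρ) * |y (k + 1) - ystar| ^ 2 + (ρ + ξ) * ‖x k - xstar‖ ^ 2)
        - ((1 / ρ) * |y (k + 2) - ystar| ^ 2 + (ρ + ξ) * ‖x (k + 1) - xstar‖ ^ 2)
        ≥ ρ * (r k) ^ 2 := by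
  intro k
  have hn : (1 : ℝ) < n := by
    by_contra! hn
    have : ξ / (2 * ((n : ℝ) - 1)) ≤ 0 := div_nonpos_of_nonneg_of_nonpos hξ.le (by linarith)
    linarith
  have hρn : ρ * (2 * ((n : ℝ) - 1)) ≤ ξ := (le_div_iff₀ (by linarith)).mp hρξ
  have hprimal := sum_le_of_isMinOn_localAugLagrangian hconv
    (fun i => isMinOn_univ_iff.mpr (hupd k i)) xstar
  have hdual := sum_add_mul_norm_sub_sq_le_of_saddle hstrong hfeas hsaddle (x (k + 1))
  have hCS : (r (k + 1) - r k) ^ 2 ≤ n * ‖x (k + 1) - x k‖ ^ 2 := by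
    simpa [Finset.sum_sub_distrib, hr] using sq_sum_le_card_mul_norm_sq (x (k + 1) - x k)
  have htri := norm_sub_sq_le_two_mul_add (x (k + 1)) (x k) xstar
  have hdualstep : (1 / ρ) * (y (k + 1) + ρ * r (k + 1) - ystar) ^ 2
      = (1 / ρ) * (y (k + 1) - ystar) ^ 2 + 2 * r (k + 1) * (y (k + 1) - ystar)
        + ρ * r (k + 1) ^ 2 := by
    field_simp
    ring
  have hsum : ∑ i, x (k + 1) i = C + r (k + 1) := by linarith [hr (k + 1)]
  rw [hsum, hfeas] at hprimal
  rw [hsum, add_sub_cancel_left] at hdual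
  rw [hy (k + 1), sq_abs, sq_abs]
  linarith [mul_nonneg hρ.le (sub_nonneg.2 hCS),
    mul_nonneg (mul_nonneg hρ.le (sub_nonneg.2 hn.le)) (sub_nonneg.2 htri),
    mul_nonneg (sub_nonneg.2 hρn)
      (add_nonneg (sq_nonneg ‖x (k + 1) - xstar‖) (sq_nonneg ‖x k - xstar‖))]

/-- Proposition 2: Lyapunov descent inequality for exact DM-ADMM. -/
theorem dm_admm_lyapunov_descent
    (n : ℕ) (f : Fin n → ℝ → ℝ) (C ρ ξ ystar : ℝ)
    (hρ : 0 < ρ) (hξ : 0 < ξ) (hρξ : ρ ≤ ξ / (2 * ((n : ℝ) - 1)))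
    (hconv : ∀ i, ConvexOn ℝ Set.univ (f i))
    (hlsc : ∀ i, LowerSemicontinuous (f i))
    (hstrong : ConvexOn ℝ Set.univ
      (fun x : EuclideanSpace ℝ (Fin n) => (∑ i, f i (x i)) - ξ * ‖x‖ ^ 2))
    (xstar : EuclideanSpace ℝ (Fin n)) (hfeas : ∑ i, xstar i = C)
    (hsaddle : ∀ x : EuclideanSpace ℝ (Fin n),
      (∑ i, f i (xstar i)) + ystar * (∑ i, xstar i - C)
        ≤ (∑ i, f i (x i)) + ystar * (∑ i, x i - C))
    (x : ℕ → EuclideanSpace ℝ (Fin n)) (y : ℕ → ℝ) (r : ℕ → ℝ)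
    (hr : ∀ k, r k = ∑ i, x k i - C)
    (hy : ∀ k, y (k + 1) = y k + ρ * r k)
    (hupd : ∀ k, ∀ i, ∀ z : ℝ,
      f i (x (k + 1) i) + y (k + 1) * (x (k + 1) i + r k - x k i)
          + (ρ / 2) * (x (k + 1) i + r k - x k i) ^ 2
        ≤ f i z + y (k + 1) * (z + r k - x k i)
          + (ρ / 2) * (z + r k - x k i) ^ 2) :
    ∀ k,
      ((1 / ρ) * |y (k + 1) - ystar| ^ 2 + (ρ + ξ) * ‖x k - xstar‖ ^ 2)
        - ((1 / ρ) * |y (k + 2) - ystar| ^ 2 + (ρ + ξ) * ‖x (k + 1) - xstar‖ ^ 2)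
        ≥ ρ * (r k) ^ 2 :=
  dm_admm_lyapunov_descent_general n f C ρ ξ ystar hρ hξ hρξ hconv hstrong xstar hfeas hsaddle x y r
    hr hy hupd
end

section
/- Let f_1,...,f_n : ℝ → ℝ be proper, lower semi-continuous, convex functions with ∑_i f_i strongly convex with parameter 2ξ, let (x*, y*) be the saddle point of minimizing ∑_i f_i(x_i) subject to ∑_i x_i = C, and let (x^k, y^k) be generated by the exact DM-ADMM updates. If there exists σ > 0 such that 0 < ρ ≤ (ξ - σ)/(2(n-1)), then the descent inequality V^k - V^{k+1} ≥ ρ(r^k)² + σ‖x^k - x*‖² + σ‖x^{k+1} - x*‖² holds, where V^k = (1/ρ)|y^{k+1} - y*|² + (ρ+ξ)‖x^k - x*‖² and r^k = ∑_i x_i^k - C. -/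
set_option maxHeartbeats 1000000

/-- Strengthened Lyapunov descent inequality under the stricter step-size bound. -/
theorem dm_admm_lyapunov_descent_strong
    (n : ℕ) (f : Fin n → ℝ → ℝ) (C ρ ξ σ ystar : ℝ)
    (hσ : 0 < σ) (hρ : 0 < ρ) (hρξ : ρ ≤ (ξ - σ) / (2 * ((n : ℝ) - 1)))
    (hconv : ∀ i, ConvexOn ℝ Set.univ (f i))
    (hlsc : ∀ i, LowerSemicontinuous (f i))
    (hstrong : ConvexOn ℝ Set.univ
      (fun x : EuclideanSpace ℝ (Fin n) => (∑ i, f i (x i)) - ξ * ‖x‖ ^ 2))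
    (xstar : EuclideanSpace ℝ (Fin n)) (hfeas : ∑ i, xstar i = C)
    (hsaddle : ∀ x : EuclideanSpace ℝ (Fin n),
      (∑ i, f i (xstar i)) + ystar * (∑ i, xstar i - C)
        ≤ (∑ i, f i (x i)) + ystar * (∑ i, x i - C))
    (x : ℕ → EuclideanSpace ℝ (Fin n)) (y : ℕ → ℝ) (r : ℕ → ℝ)
    (hr : ∀ k, r k = ∑ i, x k i - C)
    (hy : ∀ k, y (k + 1) = y k + ρ * r k)
    (hupd : ∀ k, ∀ i, ∀ z : ℝ,
      f i (x (k + 1) i) + y (k + 1) * (x (k + 1) i + r k - x k i)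
          + (ρ / 2) * (x (k + 1) i + r k - x k i) ^ 2
        ≤ f i z + y (k + 1) * (z + r k - x k i)
          + (ρ / 2) * (z + r k - x k i) ^ 2) :
    ∀ k,
      ((1 / ρ) * |y (k + 1) - ystar| ^ 2 + (ρ + ξ) * ‖x k - xstar‖ ^ 2)
        - ((1 / ρ) * |y (k + 2) - ystar| ^ 2 + (ρ + ξ) * ‖x (k + 1) - xstar‖ ^ 2)
        ≥ ρ * (r k) ^ 2 + σ * ‖x k - xstar‖ ^ 2 + σ * ‖x (k + 1) - xstar‖ ^ 2 := by
  intro k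
  have esq : ∀ v : EuclideanSpace ℝ (Fin n), ‖v‖ ^ 2 = ∑ i, (v i) ^ 2 := by
    intro v
    rw [EuclideanSpace.norm_eq, Real.sq_sqrt (by positivity)]
    simp [sq_abs]
  have esub : ∀ v v' : EuclideanSpace ℝ (Fin n),
      ‖v - v'‖ ^ 2 = ∑ i, (v i - v' i) ^ 2 := by
    intro v v'
    rw [esq]
    exact Finset.sum_congr rfl fun i _ => by simp [PiLp.sub_apply]
  have hy2 : y (k + 2) = y (k + 1) + ρ * r (k + 1) := hy (k + 1)
  -- trivial case n = 0
  rcases Nat.eq_zero_or_pos n with hn0 | hn0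
  · subst hn0
    have hC : C = 0 := by simpa using hfeas.symm
    have hrk : ∀ m, r m = 0 := by intro m; simp [hr m, hC]
    have hnorm : ∀ v : EuclideanSpace ℝ (Fin 0), ‖v‖ ^ 2 = 0 := by
      intro v; rw [esq]; simp
    have e0 : y (k+1) + ρ * r (k+1) - ystar = y (k+1) - ystar := by rw [hrk]; ring
    rw [hy2, e0, hrk k, hnorm (x k - xstar), hnorm (x (k+1) - xstar)]
    norm_num
  rcases Nat.lt_or_ge n 2 with hn1 | hn2
  · -- n = 1 : hypothesis hρξ is contradictory
    exfalso
    have hn1' : n = 1 := by omega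
    rw [hn1'] at hρξ
    simp only [Nat.cast_one, sub_self, mul_zero, div_zero] at hρξ
    linarith
  have hn2' : (2 : ℝ) ≤ (n : ℝ) := by exact_mod_cast hn2
  have hξσ : σ + 2 * ρ * ((n : ℝ) - 1) ≤ ξ := by
    have hpos : (0 : ℝ) < 2 * ((n : ℝ) - 1) := by linarith
    have := (le_div_iff₀ hpos).mp hρξ
    linarith
  -- abbreviations as plain sums
  set Sw := ∑ i, (x k i - xstar i) ^ 2 with hSw_def
  set Su := ∑ i, (x (k+1) i - xstar i) ^ 2 with hSu_def
  set D := ∑ i, (x (k+1) i - x k i) ^ 2 with hD_def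
  set Q := ∑ i, (xstar i - x (k+1) i) ^ 2 with hQ_def
  set T := ∑ i, (xstar i - x (k+1) i) * (x (k+1) i + r k - x k i) with hT_def
  have hSa : ∑ i, (xstar i - x (k+1) i) = -(r (k+1)) := by
    rw [Finset.sum_sub_distrib, hfeas]
    have := hr (k+1); linarith
  have hQSu : Q = Su := Finset.sum_congr rfl fun i _ => by ring
  have hSwnn : 0 ≤ Sw := Finset.sum_nonneg fun i _ => sq_nonneg _
  have hSunn : 0 ≤ Su := Finset.sum_nonneg fun i _ => sq_nonneg _
  have hDnn : 0 ≤ D := Finset.sum_nonneg fun i _ => sq_nonneg _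
  -- key variational inequality
  have hkey : ξ * Q ≤ (ystar - y (k+1)) * r (k+1) + ρ * T := by
    apply le_of_forall_sub_le
    intro ε hε
    have hKnn : (0:ℝ) ≤ |(ξ + ρ/2) * Q| := abs_nonneg _
    set t := min 1 (ε / (|(ξ + ρ/2) * Q| + 1)) with ht_def
    have ht0 : 0 < t := lt_min one_pos (div_pos hε (by linarith))
    have ht1 : t ≤ 1 := min_le_left _ _
    have htK : t * ((ξ + ρ/2) * Q) ≤ ε := by
      have h1 : t * ((ξ + ρ/2) * Q) ≤ t * |(ξ + ρ/2) * Q| :=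
        mul_le_mul_of_nonneg_left (le_abs_self _) ht0.le
      have h2 : t * |(ξ + ρ/2) * Q| ≤ (ε / (|(ξ + ρ/2) * Q| + 1)) * |(ξ + ρ/2) * Q| :=
        mul_le_mul_of_nonneg_right (min_le_right _ _) hKnn
      have h3 : (ε / (|(ξ + ρ/2) * Q| + 1)) * |(ξ + ρ/2) * Q| ≤ ε := by
        rw [div_mul_eq_mul_div, div_le_iff₀ (by linarith)]
        nlinarith
      linarith
    set z : Fin n → ℝ := fun i => (1 - t) * x (k+1) i + t * xstar i with hz_def
    have hzv : ∀ i, ((1-t) • x (k+1) + t • xstar : EuclideanSpace ℝ (Fin n)) i = z i := by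
      intro i; simp [hz_def, PiLp.add_apply, PiLp.smul_apply, smul_eq_mul]
    -- summed update inequality
    have h1 := Finset.sum_le_sum (fun i (_ : i ∈ Finset.univ) => hupd k i (z i))
    have eL : ∑ i, (f i (x (k+1) i) + y (k+1) * (x (k+1) i + r k - x k i)
          + (ρ/2) * (x (k+1) i + r k - x k i) ^ 2)
        = (∑ i, f i (x (k+1) i)) + y (k+1) * (∑ i, (x (k+1) i + r k - x k i))
          + (ρ/2) * (∑ i, (x (k+1) i + r k - x k i) ^ 2) := by
      rw [Finset.sum_add_distrib, Finset.sum_add_distrib, ← Finset.mul_sum, ← Finset.mul_sum]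
    have eR : ∑ i, (f i (z i) + y (k+1) * (z i + r k - x k i)
          + (ρ/2) * (z i + r k - x k i) ^ 2)
        = (∑ i, f i (z i)) + y (k+1) * (∑ i, (x (k+1) i + r k - x k i))
          + (y (k+1) * t) * (∑ i, (xstar i - x (k+1) i))
          + (ρ/2) * (∑ i, (x (k+1) i + r k - x k i) ^ 2)
          + (ρ * t) * T + ((ρ/2) * t^2) * Q := by
      rw [hT_def, hQ_def]
      rw [Finset.sum_congr rfl (fun i (_ : i ∈ Finset.univ) => (by simp only [hz_def]; ring :
        f i (z i) + y (k+1) * (z i + r k - x k i) + (ρ/2) * (z i + r k - x k i) ^ 2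
          = f i (z i) + y (k+1) * (x (k+1) i + r k - x k i)
            + (y (k+1) * t) * (xstar i - x (k+1) i)
            + (ρ/2) * (x (k+1) i + r k - x k i) ^ 2
            + (ρ * t) * ((xstar i - x (k+1) i) * (x (k+1) i + r k - x k i))
            + ((ρ/2) * t^2) * ((xstar i - x (k+1) i) ^ 2)))]
      rw [Finset.sum_add_distrib, Finset.sum_add_distrib, Finset.sum_add_distrib,
        Finset.sum_add_distrib, Finset.sum_add_distrib, ← Finset.mul_sum, ← Finset.mul_sum,
        ← Finset.mul_sum, ← Finset.mul_sum, ← Finset.mul_sum]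
    rw [eL, eR, hSa] at h1
    -- strong convexity at the convex combination
    have h2' : (∑ i, f i (z i)) - ξ * (∑ i, (z i)^2)
        ≤ (1-t) * ((∑ i, f i (x (k+1) i)) - ξ * (∑ i, (x (k+1) i)^2))
          + t * ((∑ i, f i (xstar i)) - ξ * (∑ i, (xstar i)^2)) := by
      have h2 := hstrong.2 (Set.mem_univ (x (k+1))) (Set.mem_univ xstar)
        (by linarith : (0:ℝ) ≤ 1 - t) ht0.le (by ring)
      simp only [smul_eq_mul] at h2
      have e1 : (∑ i, f i (((1-t) • x (k+1) + t • xstar : EuclideanSpace ℝ (Fin n)) i))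
          = ∑ i, f i (z i) := Finset.sum_congr rfl fun i _ => by rw [hzv i]
      have e2 : ‖((1-t) • x (k+1) + t • xstar : EuclideanSpace ℝ (Fin n))‖^2
          = ∑ i, (z i)^2 := by
        rw [esq]; exact Finset.sum_congr rfl fun i _ => by rw [hzv i]
      rw [e1, e2, esq (x (k+1)), esq xstar] at h2
      exact h2
    have hid : (1-t) * (∑ i, (x (k+1) i)^2) + t * (∑ i, (xstar i)^2)
        - (∑ i, (z i)^2) = t * (1-t) * Q := by
      rw [hQ_def, Finset.mul_sum, Finset.mul_sum, Finset.mul_sum,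
        ← Finset.sum_add_distrib, ← Finset.sum_sub_distrib]
      exact Finset.sum_congr rfl fun i _ => by simp only [hz_def]; ring
    have hSz : (∑ i, (z i)^2) = (1-t) * (∑ i, (x (k+1) i)^2)
        + t * (∑ i, (xstar i)^2) - t * (1-t) * Q := by linarith
    have h2'' : (∑ i, f i (z i)) ≤ (1-t) * (∑ i, f i (x (k+1) i))
        + t * (∑ i, f i (xstar i)) - ξ * (t * (1-t) * Q) := by
      rw [hSz] at h2'
      nlinarith [h2']
    -- saddle point inequality at x^{k+1}
    have h3 : (∑ i, f i (xstar i)) ≤ (∑ i, f i (x (k+1) i)) + ystar * r (k+1) := by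
      have := hsaddle (x (k+1))
      rw [hfeas, sub_self, mul_zero, add_zero] at this
      rw [hr (k+1)]
      exact this
    have h3t : t * (∑ i, f i (xstar i))
        ≤ t * ((∑ i, f i (x (k+1) i)) + ystar * r (k+1)) :=
      mul_le_mul_of_nonneg_left h3 ht0.le
    have hmain : 0 ≤ t * ((ystar - y (k+1)) * r (k+1) + ρ * T - ξ * Q
        + t * ((ξ + ρ/2) * Q)) := by nlinarith [h1, h2'', h3t, sq_nonneg t]
    have hdiv : 0 ≤ (ystar - y (k+1)) * r (k+1) + ρ * T - ξ * Q
        + t * ((ξ + ρ/2) * Q) := (mul_nonneg_iff_of_pos_left ht0).mp hmain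
    linarith
  -- algebraic identities for the final combination
  have h2T : 2 * T = Sw - Su - D + (2 * r k) * (∑ i, (xstar i - x (k+1) i)) := by
    rw [hT_def, hSw_def, hSu_def, hD_def, Finset.mul_sum, Finset.mul_sum,
      ← Finset.sum_sub_distrib, ← Finset.sum_sub_distrib, ← Finset.sum_add_distrib]
    exact Finset.sum_congr rfl fun i _ => by ring
  rw [hSa] at h2T
  have hCS : (r (k+1) - r k)^2 ≤ (n : ℝ) * D := by
    have hsum : r (k+1) - r k = ∑ i, (x (k+1) i - x k i) := by
      rw [hr (k+1), hr k, Finset.sum_sub_distrib]; ring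
    rw [hsum, hD_def]
    have := sq_sum_le_card_mul_sum_sq (s := (Finset.univ : Finset (Fin n)))
      (f := fun i => x (k+1) i - x k i)
    simpa using this
  have hD2 : D ≤ 2 * Su + 2 * Sw := by
    have h := Finset.sum_le_sum (fun i (_ : i ∈ Finset.univ) =>
      (by nlinarith [sq_nonneg (x (k+1) i + x k i - 2 * xstar i)] :
        (x (k+1) i - x k i)^2
          ≤ 2 * (x (k+1) i - xstar i)^2 + 2 * (x k i - xstar i)^2))
    rw [Finset.sum_add_distrib, ← Finset.mul_sum, ← Finset.mul_sum] at h
    exact h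
  -- rewrite the goal
  rw [ge_iff_le, sq_abs, sq_abs, hy2, esub, esub, ← hSw_def, ← hSu_def]
  have hkey' : ξ * Su ≤ (ystar - y (k+1)) * r (k+1) + ρ * T := hQSu ▸ hkey
  have hρT : ρ * (2 * T) = ρ * (Sw - Su - D + (2 * r k) * (-(r (k+1)))) := by rw [h2T]
  have hA : ρ * (r (k+1) - r k)^2 ≤ ρ * ((n : ℝ) * D) :=
    mul_le_mul_of_nonneg_left hCS hρ.le
  have hB : (ρ * ((n:ℝ) - 1)) * D ≤ (ρ * ((n:ℝ) - 1)) * (2 * Su + 2 * Sw) :=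
    mul_le_mul_of_nonneg_left hD2 (by nlinarith)
  have hC2 : 0 ≤ (ξ - σ - 2 * ρ * ((n:ℝ) - 1)) * (Su + Sw) :=
    mul_nonneg (by linarith) (by linarith)
  have hdual : (1/ρ) * (y (k+1) - ystar)^2
      - (1/ρ) * (y (k+1) + ρ * r (k+1) - ystar)^2
      = 2 * (ystar - y (k+1)) * r (k+1) - ρ * (r (k+1))^2 := by
    field_simp; ring
  nlinarith [hkey', hρT, hA, hB, hC2, hdual]
end
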